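/- Let R be a valuation domain and ν an ideal valuation on R. For each integer n ≥ 1, the set P_n = {x ∈ R : ν(xR) < n} is a prime ideal of R, and P_1 ⊆ P_2 ⊆ P_3 ⊆ ⋯ is an ascending chain. Consequently, if R has finite Krull dimension d, then ν takes at most d + 1 distinct values on the nonzero ideals of R. -/

import Mathlib

/-!
On a valuation domain every sum `a + b` generates an ideal contained in `aR` or in `bR`, so
monotonicity of `ν` makes `P_n = {x | ν(xR) < n}` an ideal, and `(IV2)` makes it prime. By `(IV3)`
and since finitely generated ideals are principal, every finite value `ν(I)`, `I ≠ 0`, is the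
value `ν(xR)` of some `x ≠ 0`. Distinct finite values `n₁ < ⋯ < nₖ` of this kind give a chain
`0 < P_{n₁+1} < ⋯ < P_{nₖ+1}` of primes, so there are at most `d` of them, and `⊤` is the only
other possible value.
-/

/-- An ideal valuation on an integral domain `R`. -/
def IsIdealValuation (R : Type*) [CommRing R] (ν : Ideal R → ℕ∞) : Prop :=
  ν ⊥ = 0 ∧ ν ⊤ = ⊤ ∧
  (∀ I J : Ideal R, min (ν I) (ν J) ≤ ν (I * J)) ∧
  (∀ I : Ideal R, ν I = ⨆ (J : Ideal R) (_ : J ≤ I) (_ : J.FG), ν J)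

theorem Finset.card_le_krullDim_of_strictMonoOn {α β : Type*} [LinearOrder α] [Preorder β]
    {f : α → β} {s : Finset α} (hf : StrictMonoOn f s) {b : β} (hb : ∀ a ∈ s, b < f a) :
    (s.card : WithBot ℕ∞) ≤ Order.krullDim β := by
  let e := s.orderEmbOfFin rfl
  have hfe : StrictMono (f ∘ e) := fun i j hij =>
    hf (s.orderEmbOfFin_mem rfl i) (s.orderEmbOfFin_mem rfl j) (e.strictMono hij)
  exact Order.LTSeries.length_le_krullDim <| LTSeries.mk s.card (Fin.cons b (f ∘ e))
    (Fin.strictMono_cons.2 ⟨fun j => hb _ (s.orderEmbOfFin_mem rfl j), hfe⟩)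

namespace IsIdealValuation

section CommRing

variable {R : Type*} [CommRing R] {ν : Ideal R → ℕ∞}

theorem monotone (hν : IsIdealValuation R ν) : Monotone ν := by
  intro I J hIJ
  rw [hν.2.2.2 I, hν.2.2.2 J]
  exact iSup₂_le fun K hK => le_iSup₂_of_le K (hK.trans hIJ) le_rfl

theorem exists_fg_le_eq (hν : IsIdealValuation R ν) {I : Ideal R} (hI : ν I ≠ ⊤) :
    ∃ J ≤ I, J.FG ∧ ν J = ν I := by
  have hsup := hν.2.2.2 I
  rw [iSup_subtype', iSup_subtype'] at hsup
  have : Nonempty {J : {J : Ideal R // J ≤ I} // J.1.FG} := ⟨⟨⟨⊥, bot_le⟩, Submodule.fg_bot⟩⟩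
  obtain ⟨⟨⟨J, hJI⟩, hJ⟩, hJν⟩ := ENat.exists_eq_iSup_of_lt_top (hsup ▸ hI.lt_top)
  exact ⟨J, hJI, hJ, hJν.trans hsup.symm⟩

theorem apply_span_singleton_le_of_dvd (hν : IsIdealValuation R ν) {x y : R} (h : x ∣ y) :
    ν (Ideal.span {y}) ≤ ν (Ideal.span {x}) :=
  hν.monotone (Ideal.span_singleton_le_span_singleton.2 h)

end CommRing

variable {R : Type*} [CommRing R] [IsDomain R] [ValuationRing R] {ν : Ideal R → ℕ∞}

theorem exists_ne_zero_span_singleton_eq (hν : IsIdealValuation R ν) {I : Ideal R} (hI : I ≠ ⊥)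
    (hνI : ν I ≠ ⊤) : ∃ x ≠ 0, ν (Ideal.span {x}) = ν I := by
  obtain ⟨J, hJI, hJ, hJν⟩ := hν.exists_fg_le_eq hνI
  obtain ⟨x, rfl⟩ := (IsBezout.isPrincipal_of_FG J hJ).1
  obtain ⟨y, hyI, hy⟩ := I.ne_bot_iff.1 hI
  rcases eq_or_ne x 0 with rfl | hx
  -- a zero generator forces `ν I = ν ⊥ = 0`, which every nonzero `y ∈ I` then attains
  · have h0 : ν I = 0 := by rw [← hJν, Submodule.span_singleton_eq_bot.2 rfl, hν.1]
    have hy0 := h0 ▸ hν.monotone (I.span_singleton_le_iff_mem.2 hyI)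
    exact ⟨y, hy, (nonpos_iff_eq_zero.1 hy0).trans h0.symm⟩
  · exact ⟨x, hx, hJν⟩

def ltIdeal (hν : IsIdealValuation R ν) (n : ℕ) [NeZero n] : Ideal R where
  carrier := {x | ν (Ideal.span {x}) < n}
  zero_mem' := by
    show ν (Ideal.span {0}) < n
    rw [Ideal.span_singleton_zero, hν.1, Nat.cast_pos]
    exact Nat.pos_of_ne_zero (NeZero.ne n)
  add_mem' {a b} ha hb := by
    rcases ValuationRing.dvd_total a b with h | h
    · exact (hν.apply_span_singleton_le_of_dvd (dvd_add dvd_rfl h)).trans_lt ha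
    · exact (hν.apply_span_singleton_le_of_dvd (dvd_add h dvd_rfl)).trans_lt hb
  smul_mem' c x hx := (hν.apply_span_singleton_le_of_dvd (dvd_mul_left x c)).trans_lt hx

theorem mem_ltIdeal (hν : IsIdealValuation R ν) {n : ℕ} [NeZero n] {x : R} :
    x ∈ hν.ltIdeal n ↔ ν (Ideal.span {x}) < n :=
  Iff.rfl

theorem isPrime_ltIdeal (hν : IsIdealValuation R ν) (n : ℕ) [NeZero n] :
    (hν.ltIdeal n).IsPrime where
  ne_top' h := by
    have h1 : (1 : R) ∈ hν.ltIdeal n := h ▸ Submodule.mem_top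
    rw [mem_ltIdeal, Ideal.span_singleton_one, hν.2.1] at h1
    exact not_top_lt h1
  mem_or_mem' {x y} hxy := by
    rw [mem_ltIdeal, ← Ideal.span_singleton_mul_span_singleton] at hxy
    simpa only [mem_ltIdeal, min_lt_iff] using (hν.2.2.1 _ _).trans_lt hxy

theorem ltIdeal_lt_ltIdeal (hν : IsIdealValuation R ν) {m n : ℕ} (hmn : m < n) {x : R}
    (hx : ν (Ideal.span {x}) = n) : hν.ltIdeal (m + 1) < hν.ltIdeal (n + 1) := by
  refine SetLike.lt_iff_le_and_exists.2
    ⟨fun y hy => hν.mem_ltIdeal.2 (hν.mem_ltIdeal.1 hy |>.trans_le ?_), x, ?_, ?_⟩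
  · exact_mod_cast Nat.succ_le_succ hmn.le
  · rw [mem_ltIdeal, hx]
    exact_mod_cast n.lt_succ_self
  · rw [mem_ltIdeal, hx, not_lt]
    exact_mod_cast hmn

theorem exists_finset_forall_apply_span_singleton_mem (hν : IsIdealValuation R ν) {d : ℕ}
    (hd : ringKrullDim R = d) :
    ∃ s : Finset ℕ, s.card ≤ d ∧ ∀ x ≠ 0, ∀ n : ℕ, ν (Ideal.span {x}) = n → n ∈ s := by
  set V := {n : ℕ | ∃ x ≠ 0, ν (Ideal.span {x}) = n}
  -- `⊥ < P_{n₁+1} < ⋯ < P_{nₖ+1}` is a chain of primes for any `n₁ < ⋯ < nₖ` in `V`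
  have hcard (T : Finset ℕ) (hT : ↑T ⊆ V) : T.card ≤ d := by
    let P (n : ℕ) : PrimeSpectrum R := ⟨hν.ltIdeal (n + 1), hν.isPrime_ltIdeal _⟩
    have hP : StrictMonoOn P T := fun m _ n hn hmn => by
      obtain ⟨x, -, hx⟩ := hT hn
      exact hν.ltIdeal_lt_ltIdeal hmn hx
    have hbot (n : ℕ) (hn : n ∈ T) : (⟨⊥, Ideal.isPrime_bot⟩ : PrimeSpectrum R) < P n := by
      obtain ⟨x, hx0, hx⟩ := hT hn
      refine (PrimeSpectrum.asIdeal_lt_asIdeal _ _).1 <|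
        bot_lt_iff_ne_bot.2 (Submodule.ne_bot_iff _ |>.2 ⟨x, ?_, hx0⟩)
      rw [mem_ltIdeal, hx]
      exact_mod_cast n.lt_succ_self
    have := Finset.card_le_krullDim_of_strictMonoOn hP hbot
    rw [← ringKrullDim, hd] at this
    exact_mod_cast this
  have hV : V.Finite := Set.not_infinite.1 fun hV => by
    obtain ⟨T, hT, hTd⟩ := hV.exists_subset_card_eq (d + 1)
    have := hcard T hT
    omega
  exact ⟨hV.toFinset, hcard _ (by simp), fun x hx n h => hV.mem_toFinset.2 ⟨x, hx, h⟩⟩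

end IsIdealValuation

theorem idealValuation_range_bounded_on_valuationRing
    (R : Type*) [CommRing R] [IsDomain R] [ValuationRing R]
    (ν : Ideal R → ℕ∞) (hν : IsIdealValuation R ν) :
    (∀ n : ℕ, 1 ≤ n → ∃ P : Ideal R, P.IsPrime ∧
        (P : Set R) = {x : R | ν (Ideal.span {x}) < (n : ℕ∞)}) ∧
    (∀ n : ℕ, {x : R | ν (Ideal.span {x}) < (n : ℕ∞)} ⊆
        {x : R | ν (Ideal.span {x}) < ((n + 1 : ℕ) : ℕ∞)}) ∧
    (∀ d : ℕ, ringKrullDim R = (d : WithBot ℕ∞) →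
        ∃ s : Finset ℕ∞, s.card ≤ d + 1 ∧ ∀ I : Ideal R, I ≠ ⊥ → ν I ∈ s) := by
  refine ⟨fun n hn => ?_, fun n x (hx : ν _ < n) => ?_, fun d hd => ?_⟩
  · have : NeZero n := ⟨by omega⟩
    exact ⟨hν.ltIdeal n, hν.isPrime_ltIdeal n, rfl⟩
  · exact hx.trans_le (by exact_mod_cast n.le_succ)
  obtain ⟨s, hsd, hs⟩ := hν.exists_finset_forall_apply_span_singleton_mem hd
  refine ⟨insert ⊤ (s.image (↑)), (Finset.card_insert_le _ _).trans (by
    grw [Finset.card_image_le, hsd]), fun I hI => ?_⟩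
  rcases eq_or_ne (ν I) ⊤ with hνI | hνI
  · exact hνI ▸ Finset.mem_insert_self _ _
  obtain ⟨x, hx, hxI⟩ := hν.exists_ne_zero_span_singleton_eq hI hνI
  lift ν I to ℕ using hνI with n
  exact Finset.mem_insert_of_mem (Finset.mem_image_of_mem _ (hs x hx n hxI))
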